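/- Let F and F_min be norms on ℝⁿ. Suppose that for every y ∈ ℝⁿ with F(y) = 1 and every α ∈ ∂F²(y) there exists a positive-definite symmetric bilinear form B on ℝⁿ, with induced norm N(w) = √B(w,w), such that: (1) N(y) = 1; (2) F(w) ≥ N(w) for all w ∈ ℝⁿ; (3) {w ∈ ℝⁿ : ⟨α, w⟩ = 0} = {w ∈ ℝⁿ : B(y, w) = 0}; and (4) F_min(w) ≤ N(w) for all w ∈ ℝⁿ. Then F is strongly convex with respect to F_min, i.e. F(z)² ≥ F(y)² + ⟨α, z − y⟩ + F_min(z − y)² for all y, z ∈ ℝⁿ and every α ∈ ∂F²(y). -/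

import Mathlib

/-!
Both sides of the inequality are `2`-homogeneous in `(y, z, α)`, so it suffices to take `F y = 1`.
There the inner ellipsoid `B` touches the unit sphere of `F` at `y` with tangent hyperplane
`ker α`, and Euler's identity `⟪α, y⟫ = 2` forces `α = 2 B(y, ·)`. Hence
`F(z)² ≥ B(z, z) = 1 + 2 B(y, z - y) + B(z - y, z - y) ≥ 1 + ⟪α, z - y⟫ + Fmin(z - y)²`.
At `y = 0` the only subgradient is `0`, and the claim reduces to `Fmin ≤ F`, which holds because
the ellipsoids at the unit vectors of `F` all lie between the unit balls of `F` and `Fmin`.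
-/

open scoped RealInnerProductSpace

/-- `ℝⁿ` with the Euclidean inner product. -/
abbrev En (n : ℕ) := EuclideanSpace ℝ (Fin n)

/-- A (symmetric) norm on `ℝⁿ`. -/
def IsNorm {n : ℕ} (F : En n → ℝ) : Prop :=
  (∀ y, 0 ≤ F y) ∧ (∀ y, F y = 0 ↔ y = 0) ∧
  (∀ l : ℝ, 0 < l → ∀ y, F (l • y) = l * F y) ∧
  (∀ y₁ y₂, F (y₁ + y₂) ≤ F y₁ + F y₂) ∧
  (∀ y, F (-y) = F y)

/-- The subdifferential of `F²` at `y`. -/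
def subdiffSq {n : ℕ} (F : En n → ℝ) (y : En n) : Set (En n) :=
  {α | ∀ z, (F y) ^ 2 + ⟪α, z - y⟫ ≤ (F z) ^ 2}

open Filter Topology

lemma eq_zero_of_eventually_mul_le_mul_sq {b c : ℝ} (h : ∀ᶠ t in 𝓝 0, b * t ≤ c * t ^ 2) :
    b = 0 := by
  have hmin : IsLocalMin (fun t : ℝ => c * t ^ 2 - b * t) 0 :=
    h.mono fun t ht => by simp only; linarith
  have hderiv : HasDerivAt (fun t : ℝ => c * t ^ 2 - b * t) (-b) 0 := by
    simpa using ((hasDerivAt_pow 2 0).const_mul c).fun_sub ((hasDerivAt_id' 0).const_mul b)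
  simpa using hmin.hasDerivAt_eq_zero hderiv

lemma exists_linearMap_le_of_sublinear {E : Type*} [AddCommGroup E] [Module ℝ E] {N : E → ℝ}
    (hnonneg : ∀ x, 0 ≤ N x) (hhom : ∀ c : ℝ, 0 < c → ∀ x, N (c • x) = c * N x)
    (hadd : ∀ x y, N (x + y) ≤ N x + N y) {y : E} (hy : y ≠ 0) :
    ∃ g : E →ₗ[ℝ] ℝ, g y = N y ∧ ∀ x, g x ≤ N x := by
  set f := LinearPMap.mkSpanSingleton (K := ℝ) (σ := RingHom.id ℝ) y (N y) hy
  have hf : ∀ x : f.domain, f x ≤ N x := by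
    rintro ⟨x, hx⟩
    obtain ⟨t, rfl⟩ := Submodule.mem_span_singleton.mp hx
    rw [LinearPMap.mkSpanSingleton'_apply, smul_eq_mul, RingHom.id_apply]
    rcases le_or_gt t 0 with ht | ht
    · exact (mul_nonpos_of_nonpos_of_nonneg ht (hnonneg y)).trans (hnonneg _)
    · rw [hhom t ht]
  obtain ⟨g, hgf, hgN⟩ := exists_extension_of_le_sublinear f N hhom hadd hf
  refine ⟨g, ?_, hgN⟩
  rw [hgf ⟨y, Submodule.mem_span_singleton_self y⟩, LinearPMap.mkSpanSingleton_apply]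

lemma LinearMap.apply_eq_mul_of_ker_le {K M : Type*} [Field K] [AddCommGroup M] [Module K M]
    {f g : M →ₗ[K] K} (hker : ∀ w, g w = 0 → f w = 0) {y : M} (hy : g y = 1) (w : M) :
    f w = f y * g w := by
  have hgw : g (w - g w • y) = 0 := by simp [hy]
  simpa [sub_eq_zero, mul_comm] using hker _ hgw

lemma LinearMap.apply_add_add_of_symm {R M : Type*} [CommRing R] [AddCommGroup M] [Module R M]
    {B : M →ₗ[R] M →ₗ[R] R} (hB : ∀ v w, B v w = B w v) (y v : M) :
    B (y + v) (y + v) = B y y + 2 * B y v + B v v := by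
  simp only [map_add, LinearMap.add_apply, hB v y]
  ring

section

variable {n : ℕ} {F Fmin : En n → ℝ}

lemma IsNorm.sq_smul (hF : IsNorm F) (t : ℝ) (y : En n) : F (t • y) ^ 2 = t ^ 2 * F y ^ 2 := by
  obtain ⟨-, hzero, hhom, -, hneg⟩ := hF
  rcases lt_trichotomy t 0 with ht | rfl | ht
  · rw [← neg_smul_neg, hhom _ (neg_pos.2 ht), hneg]
    ring
  · simp [(hzero 0).2 rfl]
  · rw [hhom t ht, mul_pow]

lemma IsNorm.le_of_forall_eq_one_le (hF : IsNorm F) (hFmin : IsNorm Fmin)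
    (h : ∀ y, F y = 1 → Fmin y ≤ 1) (w : En n) : Fmin w ≤ F w := by
  rcases eq_or_ne w 0 with rfl | hw
  · rw [(hF.2.1 0).2 rfl, (hFmin.2.1 0).2 rfl]
  have hpos : 0 < F w := (hF.1 w).lt_of_ne' fun h0 => hw ((hF.2.1 w).1 h0)
  have hunit : F ((F w)⁻¹ • w) = 1 := by
    rw [hF.2.2.1 _ (inv_pos.2 hpos), inv_mul_cancel₀ hpos.ne']
  have := h _ hunit
  rwa [hFmin.2.2.1 _ (inv_pos.2 hpos), inv_mul_le_iff₀ hpos, mul_one] at this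

lemma subdiffSq_nonempty (hF : IsNorm F) (y : En n) : (subdiffSq F y).Nonempty := by
  rcases eq_or_ne y 0 with rfl | hy
  · exact ⟨0, fun z => by simpa [(hF.2.1 0).2 rfl] using sq_nonneg (F z)⟩
  obtain ⟨g, hgy, hgF⟩ := exists_linearMap_le_of_sublinear hF.1 hF.2.2.1 hF.2.2.2.1 hy
  refine ⟨(2 * F y) • (InnerProductSpace.toDual ℝ (En n)).symm g.toContinuousLinearMap,
    fun z => ?_⟩
  rw [real_inner_smul_left, InnerProductSpace.toDual_symm_apply,
    LinearMap.coe_toContinuousLinearMap', map_sub, hgy]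
  nlinarith [hgF z, hF.1 y, sq_nonneg (F z - F y)]

lemma inner_eq_two_mul_sq_of_mem_subdiffSq (hhom : ∀ c : ℝ, 0 < c → ∀ x, F (c • x) = c * F x)
    {y α : En n} (hα : α ∈ subdiffSq F y) : ⟪α, y⟫ = 2 * F y ^ 2 := by
  suffices ⟪α, y⟫ - 2 * F y ^ 2 = 0 by linarith
  refine eq_zero_of_eventually_mul_le_mul_sq (c := F y ^ 2) ?_
  filter_upwards [lt_mem_nhds (show (-1 : ℝ) < 0 by norm_num)] with t ht
  have h := hα ((1 + t) • y)
  rw [hhom _ (by linarith), add_smul, one_smul, add_sub_cancel_left, real_inner_smul_right] at h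
  nlinarith

lemma eq_zero_of_mem_subdiffSq_zero (hF : IsNorm F) {α : En n} (hα : α ∈ subdiffSq F 0) :
    α = 0 := by
  refine inner_self_eq_zero.1 (eq_zero_of_eventually_mul_le_mul_sq (c := F α ^ 2) ?_)
  refine Eventually.of_forall fun t => ?_
  have h := hα (t • α)
  rw [hF.sq_smul, (hF.2.1 0).2 rfl, sub_zero, real_inner_smul_right] at h
  nlinarith

lemma smul_mem_subdiffSq (hhom : ∀ c : ℝ, 0 < c → ∀ x, F (c • x) = c * F x) {c : ℝ}
    (hc : 0 < c) {y α : En n} (hα : α ∈ subdiffSq F y) : c • α ∈ subdiffSq F (c • y) := by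
  intro z
  have h := hα (c⁻¹ • z)
  have hz : z = c • c⁻¹ • z := (smul_inv_smul₀ hc.ne' z).symm
  rw [hz, hhom c hc, hhom c hc, ← smul_sub, real_inner_smul_left, real_inner_smul_right]
  nlinarith [mul_le_mul_of_nonneg_left h (sq_nonneg c)]

def StrongConvexIneq (F Fmin : En n → ℝ) (y z α : En n) : Prop :=
  F y ^ 2 + ⟪α, z - y⟫ + Fmin (z - y) ^ 2 ≤ F z ^ 2

lemma StrongConvexIneq.smul (hF : IsNorm F) (hFmin : IsNorm Fmin) {y z α : En n}
    (h : StrongConvexIneq F Fmin y z α) (c : ℝ) :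
    StrongConvexIneq F Fmin (c • y) (c • z) (c • α) := by
  unfold StrongConvexIneq at h ⊢
  rw [← smul_sub, hF.sq_smul, hF.sq_smul, hFmin.sq_smul, real_inner_smul_left,
    real_inner_smul_right]
  nlinarith [mul_le_mul_of_nonneg_left h (sq_nonneg c)]

lemma strongConvexIneq_of_innerEllipsoid (hhom : ∀ c : ℝ, 0 < c → ∀ x, F (c • x) = c * F x)
    (hFmin : ∀ w, 0 ≤ Fmin w) {y α : En n} (hy : F y = 1) (hα : α ∈ subdiffSq F y)
    (B : En n →ₗ[ℝ] En n →ₗ[ℝ] ℝ) (hsymm : ∀ v w, B v w = B w v)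
    (hpos : ∀ v : En n, v ≠ 0 → 0 < B v v) (hNy : Real.sqrt (B y y) = 1)
    (hBF : ∀ w : En n, Real.sqrt (B w w) ≤ F w) (hker : ∀ w : En n, ⟪α, w⟫ = 0 ↔ B y w = 0)
    (hFminB : ∀ w : En n, Fmin w ≤ Real.sqrt (B w w)) (z : En n) :
    StrongConvexIneq F Fmin y z α := by
  have hBy : B y y = 1 := Real.sqrt_eq_one.1 hNy
  have hαB : ⟪α, z - y⟫ = 2 * B y (z - y) := by
    have hαy := inner_eq_two_mul_sq_of_mem_subdiffSq hhom hα
    rw [hy] at hαy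
    have := LinearMap.apply_eq_mul_of_ker_le (f := innerₛₗ ℝ α) (fun w => (hker w).2) hBy (z - y)
    simpa [hαy] using this
  have hBz : B z z ≤ F z ^ 2 := (Real.sqrt_le_iff.1 (hBF z)).2
  have hBnonneg : 0 ≤ B (z - y) (z - y) := by
    rcases eq_or_ne (z - y) 0 with h | h
    · simp [h]
    · exact (hpos _ h).le
  have hFminB' : Fmin (z - y) ^ 2 ≤ B (z - y) (z - y) :=
    (Real.le_sqrt (hFmin _) hBnonneg).1 (hFminB _)
  have hexpand := LinearMap.apply_add_add_of_symm hsymm y (z - y)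
  rw [add_sub_cancel] at hexpand
  unfold StrongConvexIneq
  rw [hy, hαB]
  linarith

end

/-- Geometric criterion for strong convexity: if at every unit vector `y` of `F` and
every `α ∈ ∂F²(y)` there is a positive-definite symmetric bilinear form `B` whose
induced norm `N = √B(·,·)` satisfies `N(y) = 1`, `N ≤ F`, whose unit sphere is tangent
to that of `F` at `y` (i.e. `ker α = {w : B(y,w) = 0}`), and with `F_min ≤ N`, then `F`
is strongly convex with respect to `F_min`. -/
theorem stronglyConvex_of_inner_ellipsoids {n : ℕ} (F Fmin : En n → ℝ)
    (hF : IsNorm F) (hFmin : IsNorm Fmin)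
    (hell : ∀ y : En n, F y = 1 → ∀ α ∈ subdiffSq F y,
      ∃ B : En n →ₗ[ℝ] En n →ₗ[ℝ] ℝ,
        (∀ v w, B v w = B w v) ∧
        (∀ v : En n, v ≠ 0 → 0 < B v v) ∧
        Real.sqrt (B y y) = 1 ∧
        (∀ w : En n, Real.sqrt (B w w) ≤ F w) ∧
        (∀ w : En n, ⟪α, w⟫ = 0 ↔ B y w = 0) ∧
        (∀ w : En n, Fmin w ≤ Real.sqrt (B w w))) :
    ∀ y z : En n, ∀ α ∈ subdiffSq F y,
      (F y) ^ 2 + ⟪α, z - y⟫ + (Fmin (z - y)) ^ 2 ≤ (F z) ^ 2 := by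
  intro y z α hα
  rcases eq_or_ne y 0 with rfl | hy
  · have hle : ∀ w, Fmin w ≤ F w := hF.le_of_forall_eq_one_le hFmin fun w hw => by
      obtain ⟨β, hβ⟩ := subdiffSq_nonempty hF w
      obtain ⟨B, -, -, hBw, -, -, hFminB⟩ := hell w hw β hβ
      exact hBw ▸ hFminB w
    rw [eq_zero_of_mem_subdiffSq_zero hF hα, (hF.2.1 0).2 rfl, sub_zero, inner_zero_left]
    nlinarith [hFmin.1 z, hle z]
  have hpos : 0 < F y := (hF.1 y).lt_of_ne' fun h0 => hy ((hF.2.1 y).1 h0)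
  have hunit : F ((F y)⁻¹ • y) = 1 := by
    rw [hF.2.2.1 _ (inv_pos.2 hpos), inv_mul_cancel₀ hpos.ne']
  have hα' := smul_mem_subdiffSq hF.2.2.1 (inv_pos.2 hpos) hα
  obtain ⟨B, hsymm, hBpos, hBy, hBF, hker, hFminB⟩ := hell _ hunit _ hα'
  have h := (strongConvexIneq_of_innerEllipsoid hF.2.2.1 hFmin.1 hunit hα' B hsymm hBpos hBy hBF
    hker hFminB ((F y)⁻¹ • z)).smul hF hFmin (F y)
  simpa only [StrongConvexIneq, smul_inv_smul₀ hpos.ne'] using h
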